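/- arXiv:2307.11062 — 2 statements merged into one kernel-verified Lean document; each statement's English description precedes it below -/
import Mathlib

section
/- Let f : ℕ → ℝ be nonnegative with ∑_{ℓ=0}^∞ f(ℓ)/max(ℓ,1) ≤ 1 (normalization), and suppose σ f(ℓ) ≤ f(ℓ+1) + f(ℓ-1) for all ℓ ≥ 1 with σ > 2. Then f(ℓ) ≤ (σ-1)^{-(ℓ-1)} f(1) for all ℓ ≥ 1; in particular f decays exponentially and no interior strict minimum followed by exponential growth is compatible with summability. -/
/-- A nonnegative `f : ℕ → ℝ` with `∑_{ℓ} f ℓ / max ℓ 1 ≤ 1`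
(summable normalization) satisfying `σ f ℓ ≤ f (ℓ+1) + f (ℓ-1)` for all `ℓ ≥ 1`
with `σ > 2` decays exponentially: `f ℓ ≤ (σ-1)^{-(ℓ-1)} f 1` for all `ℓ ≥ 1`. -/
theorem stmt3 (f : ℕ → ℝ) (σ : ℝ)
    (hf : ∀ ℓ, 0 ≤ f ℓ) (hσ : 2 < σ)
    (hsum : Summable (fun ℓ : ℕ => f ℓ / (max ℓ 1 : ℕ)))
    (hnorm : (∑' ℓ : ℕ, f ℓ / (max ℓ 1 : ℕ)) ≤ 1)
    (hineq : ∀ ℓ, 1 ≤ ℓ → σ * f ℓ ≤ f (ℓ + 1) + f (ℓ - 1)) :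
    ∀ ℓ, 1 ≤ ℓ → f ℓ ≤ ((σ - 1) ^ (ℓ - 1))⁻¹ * f 1 := by
  have hσ1 : (1:ℝ) ≤ σ - 1 := by linarith
  have hσ0 : (0:ℝ) < σ - 1 := by linarith
  -- Step 1: f is nonincreasing
  have mono : ∀ ℓ, 1 ≤ ℓ → f ℓ ≤ f (ℓ - 1) := by
    by_contra h
    push_neg at h
    obtain ⟨ℓ₀, hℓ₀, hlt⟩ := h
    set d := f ℓ₀ - f (ℓ₀ - 1) with hd
    have hd0 : 0 < d := by simp only [hd]; linarith
    -- differences stay at least d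
    have key : ∀ k, ℓ₀ ≤ k → d ≤ f (k+1) - f k := by
      intro k hk
      induction k, hk using Nat.le_induction with
      | base =>
        have h1 := hineq ℓ₀ hℓ₀
        have h2 := hf (ℓ₀ - 1)
        nlinarith
      | succ k hk ih =>
        have h1 := hineq (k+1) (by omega)
        simp only [Nat.add_sub_cancel] at h1
        have h2 := hf k
        nlinarith
    -- linear growth
    have grow : ∀ k, ℓ₀ ≤ k → f ℓ₀ + ((k:ℝ) - (ℓ₀:ℝ)) * d ≤ f k := by
      intro k hk
      induction k, hk using Nat.le_induction with
      | base => simp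
      | succ k hk ih =>
        have := key k hk
        push_cast
        linarith
    -- contradiction with summability
    have htend := hsum.tendsto_atTop_zero
    have hev := htend.eventually (gt_mem_nhds (half_pos hd0))
    obtain ⟨N, hN⟩ := hev.exists_forall_of_atTop
    set k := max N (2 * ℓ₀ + 2) with hk
    have hk1 : 1 ≤ k := by omega
    have hkℓ : ℓ₀ ≤ k := by omega
    have hk2 : 2 * ℓ₀ ≤ k := by omega
    have hlow := grow k hkℓ
    have hup := hN k (by omega)
    have hmax : (max k 1 : ℕ) = k := by omega
    rw [hmax] at hup
    have hkpos : (0:ℝ) < (k:ℝ) := by exact_mod_cast hk1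
    rw [div_lt_iff₀ hkpos] at hup
    have h2ℓ : (2:ℝ) * (ℓ₀:ℝ) ≤ (k:ℝ) := by exact_mod_cast hk2
    have := hf ℓ₀
    nlinarith
  -- Step 2: (σ-1) f ℓ ≤ f (ℓ-1)
  have decay : ∀ ℓ, 1 ≤ ℓ → (σ - 1) * f ℓ ≤ f (ℓ - 1) := by
    intro ℓ hℓ
    have h1 := hineq ℓ hℓ
    have h2 := mono (ℓ + 1) (by omega)
    simp only [Nat.add_sub_cancel] at h2
    linarith
  -- Step 3: induction
  have main : ∀ ℓ, 1 ≤ ℓ → (σ - 1) ^ (ℓ - 1) * f ℓ ≤ f 1 := by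
    intro ℓ hℓ
    induction ℓ, hℓ using Nat.le_induction with
    | base => simp
    | succ ℓ hℓ ih =>
      have h1 := decay (ℓ + 1) (by omega)
      simp only [Nat.add_sub_cancel] at h1 ⊢
      calc (σ - 1) ^ ℓ * f (ℓ + 1) = (σ - 1) ^ (ℓ - 1) * ((σ - 1) * f (ℓ + 1)) := by
            rw [← mul_assoc, ← pow_succ]
            congr 2
            omega
        _ ≤ (σ - 1) ^ (ℓ - 1) * f ℓ := by
            apply mul_le_mul_of_nonneg_left h1 (by positivity)
        _ ≤ f 1 := ih
  intro ℓ hℓ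
  have hpow : (0:ℝ) < (σ - 1) ^ (ℓ - 1) := by positivity
  rw [← div_eq_inv_mul, le_div_iff₀ hpow]
  have := main ℓ hℓ
  linarith [main ℓ hℓ]
end

section
/- Let H be a Hilbert space and let f : ℕ → H with F_L(ℓ) := ∑_{k=ℓ-L}^{ℓ+L} k ‖f(k)‖² (for ℓ ≥ L). Suppose there is μ > 0 such that for all admissible ℓ and all L ≤ L' ≤ 2L-2: μ F_{L'}(ℓ) ≤ g(ℓ+L'+2) + g(ℓ+L'+1) + g(ℓ-L'-1) + g(ℓ-L'-2), where g(k) := k‖f(k)‖². Then F_L(ℓ+L) + F_L(ℓ-L) ≥ (μ/2)(L-3) F_L(ℓ). -/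
open Finset

theorem Finset.sum_comp_le_sum_of_injOn {ι κ M : Type*} [AddCommMonoid M] [PartialOrder M]
    [IsOrderedAddMonoid M] [DecidableEq κ] {s : Finset ι} {t : Finset κ} {g : κ → M}
    (hg : ∀ k ∈ t, 0 ≤ g k) {e : ι → κ} (he : Set.InjOn e s) (hst : Set.MapsTo e s t) :
    ∑ i ∈ s, g (e i) ≤ ∑ k ∈ t, g k := by
  rw [← sum_image he]
  exact sum_le_sum_of_subset_of_nonneg (image_subset_iff.mpr hst) fun k hk _ => hg k hk

/-- The paper's `F_L(m)` when `g k = k ‖f k‖²`. -/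
def windowSum (g : ℕ → ℝ) (L m : ℕ) : ℝ :=
  ∑ k ∈ Icc (m - L) (m + L), g k

section windowSum

variable {g : ℕ → ℝ}

theorem windowSum_mono (hg : ∀ k, 0 ≤ g k) {L L' : ℕ} (h : L ≤ L') (m : ℕ) :
    windowSum g L m ≤ windowSum g L' m :=
  sum_le_sum_of_subset_of_nonneg (Icc_subset_Icc (by omega) (by omega)) fun k _ _ => hg k

theorem sum_range_comp_le_windowSum (hg : ∀ k, 0 ≤ g k) {n L m : ℕ} {e : ℕ → ℕ}
    (he : ∀ i < n, ∀ j < n, e i = e j → i = j) (hmem : ∀ j < n, m - L ≤ e j ∧ e j ≤ m + L) :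
    ∑ j ∈ range n, g (e j) ≤ windowSum g L m :=
  sum_comp_le_sum_of_injOn (fun k _ => hg k)
    (fun i hi j hj => he i (mem_range.mp hi) j (mem_range.mp hj))
    (fun j hj => mem_Icc.mpr (hmem j (mem_range.mp hj)))

/-- The boundary terms at `L' = L + j`, `j < L - 1`, fill the windows of radius `L` around
`ℓ ± L` at most twice each. -/
theorem sum_boundary_le_two_mul_windowSum (hg : ∀ k, 0 ≤ g k) {L ℓ : ℕ} (hℓ : 2 * L ≤ ℓ) :
    ∑ j ∈ range (L - 1), (g (ℓ + (L + j) + 2) + g (ℓ + (L + j) + 1)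
      + g (ℓ - (L + j) - 1) + g (ℓ - (L + j) - 2))
      ≤ 2 * (windowSum g L (ℓ + L) + windowSum g L (ℓ - L)) := by
  simp only [sum_add_distrib]
  have h₁ : ∑ j ∈ range (L - 1), g (ℓ + (L + j) + 2) ≤ windowSum g L (ℓ + L) :=
    sum_range_comp_le_windowSum hg (fun _ _ _ _ _ => by omega) (fun _ _ => by omega)
  have h₂ : ∑ j ∈ range (L - 1), g (ℓ + (L + j) + 1) ≤ windowSum g L (ℓ + L) :=
    sum_range_comp_le_windowSum hg (fun _ _ _ _ _ => by omega) (fun _ _ => by omega)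
  have h₃ : ∑ j ∈ range (L - 1), g (ℓ - (L + j) - 1) ≤ windowSum g L (ℓ - L) :=
    sum_range_comp_le_windowSum hg (fun _ _ _ _ _ => by omega) (fun _ _ => by omega)
  have h₄ : ∑ j ∈ range (L - 1), g (ℓ - (L + j) - 2) ≤ windowSum g L (ℓ - L) :=
    sum_range_comp_le_windowSum hg (fun _ _ _ _ _ => by omega) (fun _ _ => by omega)
  linarith

theorem windowSum_window_inequality (hg : ∀ k, 0 ≤ g k) {μ : ℝ} (hμ : 0 ≤ μ) {L ℓ : ℕ}
    (hℓ : 2 * L ≤ ℓ)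
    (hyp : ∀ L', L ≤ L' → L' ≤ 2 * L - 2 →
      μ * windowSum g L' ℓ ≤ g (ℓ + L' + 2) + g (ℓ + L' + 1) + g (ℓ - L' - 1) + g (ℓ - L' - 2)) :
    μ / 2 * ((L : ℝ) - 3) * windowSum g L ℓ ≤ windowSum g L (ℓ + L) + windowSum g L (ℓ - L) := by
  have hbound : ∀ j ∈ range (L - 1), μ * windowSum g L ℓ ≤ g (ℓ + (L + j) + 2)
      + g (ℓ + (L + j) + 1) + g (ℓ - (L + j) - 1) + g (ℓ - (L + j) - 2) := fun j hj =>
    (mul_le_mul_of_nonneg_left (windowSum_mono hg (Nat.le_add_right L j) ℓ) hμ).trans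
      (hyp (L + j) (by omega) (by have := mem_range.mp hj; omega))
  have hsum := (card_nsmul_le_sum _ _ _ hbound).trans (sum_boundary_le_two_mul_windowSum hg hℓ)
  rw [card_range, nsmul_eq_mul] at hsum
  have hcard : (L : ℝ) - 1 ≤ ((L - 1 : ℕ) : ℝ) := by
    rw [sub_le_iff_le_add]; exact_mod_cast (by omega : L ≤ L - 1 + 1)
  have hA : 0 ≤ μ * windowSum g L ℓ :=
    mul_nonneg hμ (sum_nonneg fun k _ => hg k)
  nlinarith

end windowSum

theorem stmt7_general {H : Type*} [NormedAddCommGroup H] (f : ℕ → H) (μ : ℝ) (L ℓ : ℕ)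
    (hμ : 0 < μ) (hℓ : 2 * L ≤ ℓ)
    (F : ℕ → ℕ → ℝ)
    (hF : ∀ L' m, F L' m = ∑ k ∈ Finset.Icc (m - L') (m + L'), (k : ℝ) * ‖f k‖ ^ 2)
    (hyp : ∀ L', L ≤ L' → L' ≤ 2 * L - 2 →
      μ * F L' ℓ ≤ (↑(ℓ + L' + 2) : ℝ) * ‖f (ℓ + L' + 2)‖ ^ 2
        + (↑(ℓ + L' + 1) : ℝ) * ‖f (ℓ + L' + 1)‖ ^ 2
        + (↑(ℓ - L' - 1) : ℝ) * ‖f (ℓ - L' - 1)‖ ^ 2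
        + (↑(ℓ - L' - 2) : ℝ) * ‖f (ℓ - L' - 2)‖ ^ 2) :
    μ / 2 * ((L : ℝ) - 3) * F L ℓ ≤ F L (ℓ + L) + F L (ℓ - L) := by
  obtain rfl : F = windowSum fun k => (k : ℝ) * ‖f k‖ ^ 2 := by
    funext L' m; exact hF L' m
  exact windowSum_window_inequality (fun k => by positivity) hμ.le hℓ hyp

/-- Step 2 of the proof of the difference inequality. With
`g k = k ‖f k‖²` and `F_{L'}(ℓ) = ∑_{k=ℓ-L'}^{ℓ+L'} k ‖f k‖²`, if
`μ F_{L'}(ℓ) ≤ g(ℓ+L'+2) + g(ℓ+L'+1) + g(ℓ-L'-1) + g(ℓ-L'-2)` for all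
`L ≤ L' ≤ 2L-2`, then `F_L(ℓ+L) + F_L(ℓ-L) ≥ (μ/2)(L-3) F_L(ℓ)`. -/
theorem stmt7 {H : Type*} [NormedAddCommGroup H] (f : ℕ → H) (μ : ℝ) (L ℓ : ℕ)
    (hμ : 0 < μ) (hL : 1 ≤ L) (hℓ : 2 * L ≤ ℓ)
    (F : ℕ → ℕ → ℝ)
    (hF : ∀ L' m, F L' m = ∑ k ∈ Finset.Icc (m - L') (m + L'), (k : ℝ) * ‖f k‖ ^ 2)
    (hyp : ∀ L', L ≤ L' → L' ≤ 2 * L - 2 →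
      μ * F L' ℓ ≤ (↑(ℓ + L' + 2) : ℝ) * ‖f (ℓ + L' + 2)‖ ^ 2
        + (↑(ℓ + L' + 1) : ℝ) * ‖f (ℓ + L' + 1)‖ ^ 2
        + (↑(ℓ - L' - 1) : ℝ) * ‖f (ℓ - L' - 1)‖ ^ 2
        + (↑(ℓ - L' - 2) : ℝ) * ‖f (ℓ - L' - 2)‖ ^ 2) :
    μ / 2 * ((L : ℝ) - 3) * F L ℓ ≤ F L (ℓ + L) + F L (ℓ - L) :=
  stmt7_general f μ L ℓ hμ hℓ F hF hyp
end
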